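/- Let A be a finite simple idempotent algebra (every congruence of A is the equality relation or the total relation) that possesses a tolerance τ with τ different from both the equality relation and the total relation A × A. Then the hypergraph H(A) is connected: any two elements of A are connected in H(A). -/

import Mathlib

/-!
Since τ is a tolerance, its reflexive-transitive closure is a congruence; it contains τ, which is
not the equality, so by simplicity it is total. By idempotency, if `x` is τ-related to every
argument of an operation then it is τ-related to the value, so a maximal τ-clique is closed under
the operations: a subuniverse, proper because τ is not total. Every τ-related pair lies in a
maximal clique, so the consecutive pairs of a τ-path from `a` to `b` give a chain of intersecting
hyperedges.
-/

namespace UA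

/-- Terms over a signature `(ι, ar)` with `n` variables. -/
inductive Term (ι : Type) (ar : ι → ℕ) (n : ℕ) : Type where
  | var : Fin n → Term ι ar n
  | app : (i : ι) → (Fin (ar i) → Term ι ar n) → Term ι ar n

/-- Evaluation of a term in an algebra with operations `ops`. -/
def Term.eval {ι : Type} {ar : ι → ℕ} {A : Type} (ops : ∀ i : ι, (Fin (ar i) → A) → A)
    {n : ℕ} : Term ι ar n → (Fin n → A) → A
  | .var j, x => x j
  | .app i ts, x => ops i fun k => Term.eval ops (ts k) x

variable {ι : Type} {ar : ι → ℕ} {A : Type}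

/-- An algebra is idempotent if every basic operation is. -/
def Idempotent (ops : ∀ i : ι, (Fin (ar i) → A) → A) : Prop :=
  ∀ (i : ι) (x : A), ops i (fun _ => x) = x

/-- A subuniverse: a subset closed under all basic operations. -/
def IsSubuniverse (ops : ∀ i : ι, (Fin (ar i) → A) → A) (S : Set A) : Prop :=
  ∀ (i : ι) (xs : Fin (ar i) → A), (∀ k, xs k ∈ S) → ops i xs ∈ S

/-- The subuniverse generated by `X`. -/
def Sg (ops : ∀ i : ι, (Fin (ar i) → A) → A) (X : Set A) : Set A :=
  ⋂₀ {S | IsSubuniverse ops S ∧ X ⊆ S}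

/-- A tolerance: a reflexive symmetric compatible binary relation. -/
def IsTolerance (ops : ∀ i : ι, (Fin (ar i) → A) → A) (τ : A → A → Prop) : Prop :=
  (∀ x, τ x x) ∧ (∀ x y, τ x y → τ y x) ∧
  ∀ (i : ι) (xs ys : Fin (ar i) → A), (∀ k, τ (xs k) (ys k)) → τ (ops i xs) (ops i ys)

/-- A congruence: a compatible equivalence relation. -/
def IsCongruence (ops : ∀ i : ι, (Fin (ar i) → A) → A) (θ : A → A → Prop) : Prop :=
  Equivalence θ ∧
  ∀ (i : ι) (xs ys : Fin (ar i) → A), (∀ k, θ (xs k) (ys k)) → θ (ops i xs) (ops i ys)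

/-- A congruence of the subalgebra with universe `B`, viewed as a partial
equivalence relation on the big algebra whose domain is exactly `B` and which is
compatible with all operations. -/
def IsCongruenceOn (ops : ∀ i : ι, (Fin (ar i) → A) → A) (B : Set A)
    (θ : A → A → Prop) : Prop :=
  (∀ x y, θ x y → x ∈ B ∧ y ∈ B) ∧
  (∀ x ∈ B, θ x x) ∧
  (∀ x y, θ x y → θ y x) ∧
  (∀ x y z, θ x y → θ y z → θ x z) ∧
  ∀ (i : ι) (xs ys : Fin (ar i) → A), (∀ k, θ (xs k) (ys k)) → θ (ops i xs) (ops i ys)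

/-- `f` is a binary term operation of the algebra. -/
def IsTermOp2 (ops : ∀ i : ι, (Fin (ar i) → A) → A) (f : A → A → A) : Prop :=
  ∃ t : Term ι ar 2, ∀ x y, f x y = t.eval ops ![x, y]

/-- `g` is a ternary term operation of the algebra. -/
def IsTermOp3 (ops : ∀ i : ι, (Fin (ar i) → A) → A) (g : A → A → A → A) : Prop :=
  ∃ t : Term ι ar 3, ∀ x y z, g x y z = t.eval ops ![x, y, z]

/-- Connectivity of `a` and `b` in the hypergraph `H(A)` whose hyperedges are the
nonempty proper subuniverses: a chain of hyperedges with consecutive ones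
intersecting, the first containing `a`, the last containing `b`. -/
def HConnected (ops : ∀ i : ι, (Fin (ar i) → A) → A) (a b : A) : Prop :=
  ∃ L : List (Set A),
    (∀ S ∈ L, IsSubuniverse ops S ∧ S.Nonempty ∧ S ≠ Set.univ) ∧
    L.Chain' (fun S T => (S ∩ T).Nonempty) ∧
    ∃ h : L ≠ [], a ∈ L.head h ∧ b ∈ L.getLast h

def IsHyperedge (ops : ∀ i : ι, (Fin (ar i) → A) → A) (S : Set A) : Prop :=
  IsSubuniverse ops S ∧ S.Nonempty ∧ S ≠ Set.univ

section ReflTransGen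

variable {κ α : Type*} {r : α → α → Prop}

theorem reflTransGen_pi_update [DecidableEq κ] (hr : ∀ x, r x x) (xs : κ → α) (k : κ) {b : α}
    (h : Relation.ReflTransGen r (xs k) b) :
    Relation.ReflTransGen (fun xs ys : κ → α => ∀ k, r (xs k) (ys k)) xs
      (Function.update xs k b) := by
  induction h with
  | refl => rw [Function.update_eq_self]
  | tail _ hbc ih =>
    refine ih.tail fun j => ?_
    rcases eq_or_ne j k with rfl | hj
    · simpa using hbc
    · simpa [hj] using hr _

theorem reflTransGen_pi [Fintype κ] (hr : ∀ x, r x x) {xs ys : κ → α}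
    (h : ∀ k, Relation.ReflTransGen r (xs k) (ys k)) :
    Relation.ReflTransGen (fun xs ys : κ → α => ∀ k, r (xs k) (ys k)) xs ys := by
  classical
  suffices ∀ S : Finset κ, ∀ xs, (∀ k ∉ S, xs k = ys k) →
      (∀ k, Relation.ReflTransGen r (xs k) (ys k)) →
      Relation.ReflTransGen (fun xs ys : κ → α => ∀ k, r (xs k) (ys k)) xs ys from
    this Finset.univ xs (by simp) h
  intro S
  induction S using Finset.induction_on with
  | empty =>
    intro xs hxs _
    rw [funext fun k => hxs k (Finset.notMem_empty k)]
  | insert a S _ ih =>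
    intro xs hxs h
    refine (reflTransGen_pi_update hr xs a (h a)).trans (ih _ (fun k hk => ?_) fun k => ?_)
    · rcases eq_or_ne k a with rfl | hka
      · simp
      · simpa [hka] using hxs k (by simp [hka, hk])
    · rcases eq_or_ne k a with rfl | hka
      · simpa using Relation.ReflTransGen.refl
      · simpa [hka] using h k

end ReflTransGen

variable {ops : ∀ i : ι, (Fin (ar i) → A) → A} {τ : A → A → Prop}

theorem IsTolerance.isCongruence_reflTransGen (hτ : IsTolerance ops τ) :
    IsCongruence ops (Relation.ReflTransGen τ) := by
  have : Std.Symm τ := ⟨hτ.2.1⟩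
  refine ⟨⟨fun _ => .refl, fun h => Std.Symm.symm _ _ h, .trans⟩, fun i xs ys h => ?_⟩
  exact (reflTransGen_pi hτ.1 h).lift (ops i) (hτ.2.2 i)

theorem IsTolerance.reflTransGen_total
    (hsimple : ∀ θ : A → A → Prop, IsCongruence ops θ →
      (∀ x y, θ x y ↔ x = y) ∨ (∀ x y, θ x y))
    (hτ : IsTolerance ops τ) (hτne_eq : ¬ (∀ x y, τ x y ↔ x = y)) (x y : A) :
    Relation.ReflTransGen τ x y := by
  refine (hsimple _ hτ.isCongruence_reflTransGen).resolve_left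
    (fun h => hτne_eq fun x y => ?_) x y
  exact ⟨fun hxy => (h x y).1 (.single hxy), fun hxy => hxy ▸ hτ.1 x⟩

theorem exists_maximal_pairwise_superset {α : Type*} (r : α → α → Prop) {C : Set α}
    (hC : C.Pairwise r) : ∃ B, C ⊆ B ∧ Maximal (fun B : Set α => B.Pairwise r) B :=
  zorn_subset_nonempty {B | B.Pairwise r}
    (fun _ hc hchain _ => ⟨_, hchain.pairwise_sUnion.2 hc, fun _ => Set.subset_sUnion_of_mem⟩)
    C hC

theorem IsTolerance.isSubuniverse_of_maximal_pairwise (hidem : Idempotent ops)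
    (hτ : IsTolerance ops τ) {B : Set A} (hB : Maximal (fun B : Set A => B.Pairwise τ) B) :
    IsSubuniverse ops B := by
  intro i xs hxs
  have hrel : ∀ x ∈ B, τ x (ops i xs) := fun x hx => by
    simpa [hidem i x] using hτ.2.2 i (fun _ => x) xs fun k =>
      (eq_or_ne x (xs k)).elim (fun h => h ▸ hτ.1 x) (hB.prop hx (hxs k))
  exact hB.mem_of_prop_insert <| Set.pairwise_insert.2
    ⟨hB.prop, fun x hx _ => ⟨hτ.2.1 _ _ (hrel x hx), hrel x hx⟩⟩

theorem IsTolerance.exists_isHyperedge (hidem : Idempotent ops) (hτ : IsTolerance ops τ)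
    (hτne_total : ¬ (∀ x y, τ x y)) {a b : A} (hab : τ a b) :
    ∃ S, IsHyperedge ops S ∧ a ∈ S ∧ b ∈ S := by
  obtain ⟨B, hsub, hB⟩ := exists_maximal_pairwise_superset τ (Set.pairwise_pair.2 fun _ =>
    ⟨hab, hτ.2.1 _ _ hab⟩)
  refine ⟨B, ⟨hτ.isSubuniverse_of_maximal_pairwise hidem hB, ⟨a, hsub (by simp)⟩, ?_⟩,
    hsub (by simp), hsub (by simp)⟩
  rintro rfl
  exact hτne_total fun x y => (eq_or_ne x y).elim (fun h => h ▸ hτ.1 x) (hB.prop trivial trivial)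

theorem HConnected.of_mem {S : Set A} (hS : IsHyperedge ops S) {a b : A} (ha : a ∈ S)
    (hb : b ∈ S) : HConnected ops a b :=
  ⟨[S], fun _ hT => List.mem_singleton.1 hT ▸ hS, List.isChain_singleton S, List.cons_ne_nil S [],
    ha, hb⟩

theorem HConnected.trans {a b c : A} (hab : HConnected ops a b) (hbc : HConnected ops b c) :
    HConnected ops a c := by
  obtain ⟨L, hL, hLchain, hLne, haL, hbL⟩ := hab
  obtain ⟨M, hM, hMchain, hMne, hbM, hcM⟩ := hbc
  refine ⟨L ++ M, fun S hS => (List.mem_append.1 hS).elim (hL S) (hM S), ?_, by simp [hLne],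
    by rwa [List.head_append_of_ne_nil hLne], by rwa [List.getLast_append_right hMne]⟩
  refine hLchain.append hMchain fun S hS T hT => ?_
  rw [List.getLast?_eq_some_getLast hLne, Option.mem_some_iff] at hS
  rw [List.head?_eq_some_head hMne, Option.mem_some_iff] at hT
  exact ⟨b, hS ▸ hbL, hT ▸ hbM⟩

theorem stmt_4_general {ι : Type} {ar : ι → ℕ} {A : Type}
    (ops : ∀ i : ι, (Fin (ar i) → A) → A)
    (hidem : Idempotent ops)
    (hsimple : ∀ θ : A → A → Prop, IsCongruence ops θ →
      (∀ x y, θ x y ↔ x = y) ∨ (∀ x y, θ x y))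
    (τ : A → A → Prop) (hτ : IsTolerance ops τ)
    (hτne_eq : ¬ (∀ x y, τ x y ↔ x = y))
    (hτne_total : ¬ (∀ x y, τ x y)) :
    ∀ a b : A, HConnected ops a b := by
  have of_tolerance {x y : A} (hxy : τ x y) : HConnected ops x y := by
    obtain ⟨S, hS, hx, hy⟩ := hτ.exists_isHyperedge hidem hτne_total hxy
    exact .of_mem hS hx hy
  intro a b
  induction hτ.reflTransGen_total hsimple hτne_eq a b with
  | refl => exact of_tolerance (hτ.1 a)
  | tail _ hcd ih => exact ih.trans (of_tolerance hcd)

/-- a finite simple idempotent algebra with a proper nontrivial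
tolerance has a connected hypergraph H(A). -/
theorem stmt_4 {ι : Type} {ar : ι → ℕ} {A : Type} [Fintype A] [Nonempty A]
    (ops : ∀ i : ι, (Fin (ar i) → A) → A)
    (hidem : Idempotent ops)
    (hsimple : ∀ θ : A → A → Prop, IsCongruence ops θ →
      (∀ x y, θ x y ↔ x = y) ∨ (∀ x y, θ x y))
    (τ : A → A → Prop) (hτ : IsTolerance ops τ)
    (hτne_eq : ¬ (∀ x y, τ x y ↔ x = y))
    (hτne_total : ¬ (∀ x y, τ x y)) :
    ∀ a b : A, HConnected ops a b :=
  stmt_4_general ops hidem hsimple τ hτ hτne_eq hτne_total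

end UA
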